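/- arXiv:2510.21599 — 4 statements merged into one kernel-verified Lean document; each statement's English description precedes it below -/
import Mathlib

section
/- For every n ≥ 2, every j ∈ {1,…,n}, every binary string s ∈ {0,1}^j with k := s_1 + ⋯ + s_j ≤ n − 1, and every i ∈ {1,…,n}, the matrix product G^{(1)}(s_1) · G^{(2)}(s_2) ⋯ G^{(j)}(s_j) ∈ ℝ^{[n] × Q} has entry at row i and column (i', c') equal to ε · (k! · (n − k − 1)! / j!) if i' = i and c' = k, and equal to 0 otherwise, where ε = −1 if (i ≤ j and s_i = 0) and ε = +1 otherwise. -/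
open Finset

noncomputable section

/-- First-layer core `G^{(1)}(b)` of the TT representation of the modified weighted
coalitional tensor.  Rows are indexed by the feature `i` to be explained (0-based:
feature 1 is index `0`), columns by states `(i', c')` recording the feature to be
explained and the running coalition count. -/
def G1 (n : ℕ) (b : Bool) : Matrix (Fin n) (Fin n × Fin n) ℝ :=
  fun i p =>
    if b then
      (if p.1 = i ∧ (p.2 : ℕ) = 1 then ((n - 2).factorial : ℝ) else 0)
    else
      (if p.1 = i ∧ (p.2 : ℕ) = 0 then
        (if (i : ℕ) = 0 then (-1 : ℝ) else 1) * ((n - 1).factorial : ℝ) else 0)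

/-- Core `G^{(j)}(b)` at layer `j` (1-based, `2 ≤ j ≤ n`).  States `(i, c)` record the
feature `i` (0-based) to be explained and the coalition count `c ∈ {0,…,n−1}`. -/
def Gmid (n j : ℕ) (b : Bool) : Matrix (Fin n × Fin n) (Fin n × Fin n) ℝ :=
  fun p q =>
    if b then
      (if q.1 = p.1 ∧ (p.2 : ℕ) ≤ n - 2 ∧ (q.2 : ℕ) = (p.2 : ℕ) + 1 then
        ((p.2 : ℕ) + 1 : ℝ) / ((j : ℝ) * ((n - (p.2 : ℕ) - 1 : ℕ) : ℝ)) else 0)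
    else
      (if q = p then (if j = (p.1 : ℕ) + 1 then (-1 : ℝ) else 1) / (j : ℝ) else 0)

/-- The matrix product `G^{(1)}(s_1) · G^{(2)}(s_2) ⋯ G^{(j)}(s_j)` of the cores along
a bit string `s ∈ {0,1}^j` (the value at `j = 0` is junk). -/
def ttProd (n : ℕ) : (j : ℕ) → (Fin j → Bool) → Matrix (Fin n) (Fin n × Fin n) ℝ
  | 0, _ => 0
  | 1, s => G1 n (s 0)
  | (j + 2), s =>
      ttProd n (j + 1) (fun t => s t.castSucc) * Gmid n (j + 2) (s (Fin.last (j + 1)))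

/-- Number of `1`-bits of `s`, i.e. the size of the coalition encoded by `s`. -/
def trueCount {j : ℕ} (s : Fin j → Bool) : ℕ :=
  (Finset.univ.filter (fun t => s t = true)).card

lemma trueCount_eq_sum {j : ℕ} (s : Fin j → Bool) :
    trueCount s = ∑ t, if s t then 1 else 0 := by
  rw [trueCount, Finset.card_filter]

lemma trueCount_castSucc {m : ℕ} (s : Fin (m+1) → Bool) :
    trueCount s = trueCount (fun t => s t.castSucc) + (if s (Fin.last m) then 1 else 0) := by
  rw [trueCount_eq_sum, trueCount_eq_sum, Fin.sum_univ_castSucc]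

lemma aux (n : ℕ) (hn : 2 ≤ n) (i : Fin n) :
    ∀ j : ℕ, 1 ≤ j → j ≤ n → ∀ s : Fin j → Bool, trueCount s ≤ n - 1 →
      ∀ i' c' : Fin n,
    ttProd n j s i (i', c') =
      if i' = i ∧ (c' : ℕ) = trueCount s then
        (if h : (i : ℕ) < j then (if s ⟨i, h⟩ then (1 : ℝ) else -1) else 1) *
          ((((trueCount s).factorial * (n - trueCount s - 1).factorial : ℕ) : ℝ) /
            (j.factorial : ℝ))
      else 0 := by
  intro j
  induction j with
  | zero => omega
  | succ m ih =>
    intro _ hjn s hk i' c'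
    cases m with
    | zero =>
      -- base case j = 1
      have hs1 : trueCount s = if s 0 then 1 else 0 := by
        rw [trueCount_eq_sum, Fin.sum_univ_one]
      have h01 : (0:ℕ) < 1 := one_pos
      show G1 n (s 0) i (i', c') = _
      rcases hb : s 0 with _ | _
      · -- s 0 = false
        have ht : trueCount s = 0 := by simp [hs1, hb]
        simp only [G1, hb, ht, Bool.false_eq_true, if_false]
        by_cases hc : i' = i ∧ (c' : ℕ) = 0
        · rw [if_pos hc, if_pos hc]
          have : ∀ h : (i:ℕ) < 1, s ⟨i, h⟩ = false := by
            intro h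
            have : (⟨(i:ℕ), h⟩ : Fin 1) = 0 := by
              ext; omega
            rw [this, hb]
          by_cases hi : (i:ℕ) < 1
          · rw [dif_pos hi, this hi]
            have hi0 : (i : ℕ) = 0 := by omega
            simp [hi0, Nat.factorial]
          · rw [dif_neg hi]
            have hi0 : ¬ (i:ℕ) = 0 := by omega
            simp [hi0, Nat.factorial]
        · rw [if_neg hc, if_neg hc]
      · -- s 0 = true
        have ht : trueCount s = 1 := by simp [hs1, hb]
        simp only [G1, hb, if_true, ht]
        by_cases hc : i' = i ∧ (c' : ℕ) = 1
        · rw [if_pos hc, if_pos hc]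
          have hv : ∀ h : (i:ℕ) < 1, s ⟨i, h⟩ = true := by
            intro h
            have : (⟨(i:ℕ), h⟩ : Fin 1) = 0 := by ext; omega
            rw [this, hb]
          have : (if h : (i:ℕ) < 1 then (if s ⟨i,h⟩ then (1:ℝ) else -1) else 1) = 1 := by
            by_cases hi : (i:ℕ) < 1
            · rw [dif_pos hi, hv hi]; simp
            · rw [dif_neg hi]
          rw [this]
          have : n - 1 - 1 = n - 2 := by omega
          simp [this, Nat.factorial]
        · rw [if_neg hc, if_neg hc]
    | succ m' =>
      -- step case: j = m' + 2
      have hcs := trueCount_castSucc s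
      set s' : Fin (m'+1) → Bool := fun t => s t.castSucc with hs'
      set k' := trueCount s' with hk'
      have hk'n : k' ≤ n - 1 := by
        rcases hb : s (Fin.last (m'+1)) <;> rw [hb] at hcs <;> simp at hcs <;> omega
      have hk'lt : k' < n := by omega
      have ihA := ih (by omega) (by omega) s' hk'n
      set p₀ : Fin n × Fin n := (i, ⟨k', hk'lt⟩) with hp₀
      have hstep : ttProd n (m'+1+1) s i (i', c') =
          ∑ p : Fin n × Fin n, ttProd n (m'+1) s' i p *
            Gmid n (m'+2) (s (Fin.last (m'+1))) p (i', c') := by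
        show (ttProd n (m'+1) s' * Gmid n (m'+2) (s (Fin.last (m'+1)))) i (i',c') = _
        rw [Matrix.mul_apply]
      rw [hstep, Finset.sum_eq_single p₀]
      rotate_left
      · intro p _ hp
        obtain ⟨p1, p2⟩ := p
        rw [ihA p1 p2, if_neg, zero_mul]
        rintro ⟨h1, h2⟩
        exact hp (by rw [hp₀, Prod.mk.injEq]; exact ⟨h1, Fin.ext h2⟩)
      · intro h; exact absurd (Finset.mem_univ p₀) h
      rw [ihA i ⟨k', hk'lt⟩, if_pos ⟨rfl, rfl⟩]
      rcases hb : s (Fin.last (m'+1))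
      · -- last bit is false
        rw [hb] at hcs; simp only [Bool.false_eq_true, if_false, add_zero] at hcs
        rw [hcs]
        have hgmid : Gmid n (m'+2) false p₀ (i', c') =
            if (i', c') = p₀ then (if m'+2 = (i:ℕ)+1 then (-1:ℝ) else 1) / ((m'+2 : ℕ) : ℝ)
            else 0 := by
          simp [Gmid, hp₀]
        rw [hgmid]
        by_cases hc : i' = i ∧ (c' : ℕ) = k'
        · have hpair : (i', c') = p₀ := by
            rw [hp₀, Prod.mk.injEq]; exact ⟨hc.1, Fin.ext hc.2⟩
          rw [if_pos hpair, if_pos hc]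
          have hsign : (if h : (i : ℕ) < m'+1+1 then (if s ⟨i, h⟩ then (1:ℝ) else -1) else 1)
              = (if h : (i : ℕ) < m'+1 then (if s' ⟨i, h⟩ then (1:ℝ) else -1) else 1) *
                (if m'+2 = (i:ℕ)+1 then (-1:ℝ) else 1) := by
            rcases Nat.lt_trichotomy (i : ℕ) (m'+1) with hlt | heq | hgt
            · rw [dif_pos (by omega : (i:ℕ) < m'+1+1), dif_pos hlt,
                if_neg (by omega : ¬ m'+2 = (i:ℕ)+1), mul_one]
              have : s ⟨(i:ℕ), by omega⟩ = s' ⟨(i:ℕ), hlt⟩ := by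
                rw [hs']; congr 1
              rw [this]
            · rw [dif_pos (by omega : (i:ℕ) < m'+1+1), dif_neg (by omega),
                if_pos (by omega : m'+2 = (i:ℕ)+1)]
              have : (⟨(i:ℕ), by omega⟩ : Fin (m'+1+1)) = Fin.last (m'+1) := by
                ext; simpa using heq
              rw [this, hb]
              norm_num
            · rw [dif_neg (by omega), dif_neg (by omega),
                if_neg (by omega : ¬ m'+2 = (i:ℕ)+1), one_mul]
          rw [hsign]
          have hF1 : ((m'+1).factorial : ℝ) ≠ 0 := by positivity
          have hF2 : ((m'+2 : ℕ) : ℝ) ≠ 0 := by positivity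
          rw [show (m'+1+1).factorial = (m'+2) * (m'+1).factorial from rfl,
            show ((((m'+2) * (m'+1).factorial : ℕ)) : ℝ)
              = ((m'+2 : ℕ) : ℝ) * ((m'+1).factorial : ℝ) by push_cast; ring]
          have key : ∀ a e K F1 F2 : ℝ, F1 ≠ 0 → F2 ≠ 0 →
              a * (K / F1) * (e / F2) = a * e * (K / (F2 * F1)) := by
            intros a e K F1 F2 h1 h2; field_simp
          exact key _ _ _ _ _ hF1 hF2
        · rw [if_neg hc, if_neg (fun hpair => hc (by
            rw [hp₀, Prod.mk.injEq] at hpair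
            exact ⟨hpair.1, by rw [hpair.2]⟩)), mul_zero]
      · -- last bit is true
        rw [hb] at hcs; norm_num at hcs
        rw [hcs]
        have hkk : k' ≤ n - 2 := by
          have := hk; rw [hcs] at this; omega
        have hgmid : Gmid n (m'+2) true p₀ (i', c') =
            if i' = i ∧ (c' : ℕ) = k' + 1 then
              ((k' : ℝ) + 1) / (((m'+2 : ℕ) : ℝ) * ((n - k' - 1 : ℕ) : ℝ)) else 0 := by
          rw [hp₀]
          simp only [Gmid]
          rw [if_pos trivial]
          by_cases hc : i' = i ∧ (c' : ℕ) = k' + 1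
          · rw [if_pos (show (i',c').1 = i ∧ k' ≤ n - 2 ∧ ((i',c').2 : ℕ) = k' + 1 from
              ⟨hc.1, hkk, hc.2⟩), if_pos hc]
          · rw [if_neg (fun h => hc ⟨h.1, h.2.2⟩), if_neg hc]
        rw [hgmid]
        by_cases hc : i' = i ∧ (c' : ℕ) = k' + 1
        · rw [if_pos hc, if_pos hc]
          have hsign : (if h : (i : ℕ) < m'+1+1 then (if s ⟨i, h⟩ then (1:ℝ) else -1) else 1)
              = (if h : (i : ℕ) < m'+1 then (if s' ⟨i, h⟩ then (1:ℝ) else -1) else 1) := by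
            rcases Nat.lt_trichotomy (i : ℕ) (m'+1) with hlt | heq | hgt
            · rw [dif_pos (by omega : (i:ℕ) < m'+1+1), dif_pos hlt]
              have : s ⟨(i:ℕ), by omega⟩ = s' ⟨(i:ℕ), hlt⟩ := by
                rw [hs']; congr 1
              rw [this]
            · rw [dif_pos (by omega : (i:ℕ) < m'+1+1), dif_neg (by omega)]
              have : (⟨(i:ℕ), by omega⟩ : Fin (m'+1+1)) = Fin.last (m'+1) := by
                ext; simpa using heq
              rw [this, hb]; norm_num
            · rw [dif_neg (by omega), dif_neg (by omega)]
          rw [hsign]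
          have hd : n - k' - 1 = (n - k' - 2) + 1 := by omega
          have hd2 : n - (k' + 1) - 1 = n - k' - 2 := by omega
          have hfac1 : (n - k' - 1).factorial = (n - k' - 1) * (n - k' - 2).factorial := by
            rw [hd]; rw [Nat.factorial_succ, ← hd]
          have hfac2 : (k' + 1).factorial = (k' + 1) * k'.factorial := rfl
          rw [show (m'+1+1).factorial = (m'+2) * (m'+1).factorial from rfl,
            hd2, hfac1, hfac2]
          have hF1 : ((m'+1).factorial : ℝ) ≠ 0 := by positivity
          have hF2 : ((m'+2 : ℕ) : ℝ) ≠ 0 := by positivity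
          have hF3 : ((n - k' - 1 : ℕ) : ℝ) ≠ 0 :=
            Nat.cast_ne_zero.mpr (by omega)
          rw [show ((k'.factorial * ((n-k'-1) * (n-k'-2).factorial) : ℕ) : ℝ)
                = (k'.factorial : ℝ) * (((n-k'-1 : ℕ) : ℝ) * ((n-k'-2).factorial : ℝ)) by
                push_cast; ring,
            show (((k'+1) * k'.factorial * (n-k'-2).factorial : ℕ) : ℝ)
                = ((k' : ℝ) + 1) * (k'.factorial : ℝ) * ((n-k'-2).factorial : ℝ) by
                push_cast; ring,
            show (((m'+2) * (m'+1).factorial : ℕ) : ℝ)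
                = ((m'+2 : ℕ) : ℝ) * ((m'+1).factorial : ℝ) by push_cast; ring]
          have key2 : ∀ a KA D KB F1 M E : ℝ, F1 ≠ 0 → M ≠ 0 → D ≠ 0 →
              a * (KA * (D * KB) / F1) * (E / (M * D)) = a * (E * KA * KB / (M * F1)) := by
            intro a KA D KB F1 M E h1 h2 h3; field_simp
          exact key2 _ _ _ _ _ _ _ hF1 hF2 hF3
        · rw [if_neg hc, if_neg hc, mul_zero]

/-- Explicit form of the partial products of the TT cores of the modified weighted
coalitional tensor. -/
theorem ttProd_entries
    (n j : ℕ) (hn : 2 ≤ n) (hj1 : 1 ≤ j) (hjn : j ≤ n)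
    (s : Fin j → Bool) (hk : trueCount s ≤ n - 1)
    (i : Fin n) (i' c' : Fin n) :
    ttProd n j s i (i', c') =
      if i' = i ∧ (c' : ℕ) = trueCount s then
        (if h : (i : ℕ) < j then (if s ⟨i, h⟩ then (1 : ℝ) else -1) else 1) *
          ((((trueCount s).factorial * (n - trueCount s - 1).factorial : ℕ) : ℝ) /
            (j.factorial : ℝ))
      else 0 :=
  aux n hn i j hj1 hjn s hk i' c'
end
end

section
/- Let M be a tensor-train model with cores A^{(j)} and let P be a tensor-train distribution with cores B^{(j)}. Then for every input x ∈ D and every coalition S ⊆ {1,…,n}, the marginal value function factorizes as the ordered matrix product V_M(x, S; P) = ∏_{j=1}^{n} C^{(j)}, where C^{(j)} := Σ_{σ ∈ [N_j]} A^{(j)}(τ_j(σ)) ⊗ B^{(j)}(σ) with τ_j(σ) = x_j if j ∈ S and τ_j(σ) = σ otherwise; here each C^{(j)} is a d_j e_j × d_{j+1} e_{j+1} matrix and the full product is a 1×1 matrix identified with a scalar. -/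
open Finset

noncomputable section

/-- The merged input `do(x, S, x')`: takes `x_i` for `i ∈ S`, else `x'_i`. -/
def mergeDo {n : ℕ} {N : Fin n → ℕ} (x x' : ∀ i, Fin (N i)) (S : Finset (Fin n)) :
    ∀ i, Fin (N i) :=
  fun i => if i ∈ S then x i else x' i

/-- The marginal value function `V_M(x, S; P) = Σ_{x'} P(x') · M(do(x,S,x'))`. -/
def margValue {n : ℕ} {N : Fin n → ℕ} (M P : (∀ i, Fin (N i)) → ℝ)
    (x : ∀ i, Fin (N i)) (S : Finset (Fin n)) : ℝ :=
  ∑ x' : ∀ i, Fin (N i), P x' * M (mergeDo x x' S)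

/-- Ordered matrix product `E 0 · E 1 ⋯ E (j−1)` of a layered family of matrices. -/
def layerProd (ι : ℕ → Type) [∀ j, Fintype (ι j)] [∀ j, DecidableEq (ι j)]
    (E : ∀ j, Matrix (ι j) (ι (j + 1)) ℝ) : ∀ j, Matrix (ι 0) (ι j) ℝ
  | 0 => 1
  | j + 1 => layerProd ι E j * E j

open Matrix

lemma layerProd_congr (ι : ℕ → Type) [∀ j, Fintype (ι j)] [∀ j, DecidableEq (ι j)]
    (E E' : ∀ j, Matrix (ι j) (ι (j + 1)) ℝ) :
    ∀ j, (∀ i, i < j → E i = E' i) → layerProd ι E j = layerProd ι E' j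
  | 0, _ => rfl
  | j + 1, h => by
    rw [layerProd, layerProd,
      layerProd_congr ι E E' j (fun i hi => h i (Nat.lt_succ_of_lt hi)),
      h j (Nat.lt_succ_self j)]

lemma layerProd_kronecker_sum (ι κ : ℕ → Type) [∀ j, Fintype (ι j)] [∀ j, DecidableEq (ι j)]
    [∀ j, Fintype (κ j)] [∀ j, DecidableEq (κ j)]
    (G : ℕ → Type) [∀ j, Fintype (G j)]
    (E : ∀ j, G j → Matrix (ι j) (ι (j + 1)) ℝ)
    (F : ∀ j, G j → Matrix (κ j) (κ (j + 1)) ℝ) :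
    ∀ j, layerProd (fun j => ι j × κ j)
        (fun j => ∑ σ : G j, kroneckerMap (· * ·) (E j σ) (F j σ)) j
      = ∑ g : ∀ i : Fin j, G i,
          kroneckerMap (· * ·)
            (layerProd ι (fun i => if h : i < j then E i (g ⟨i, h⟩) else 0) j)
            (layerProd κ (fun i => if h : i < j then F i (g ⟨i, h⟩) else 0) j)
  | 0 => by
    rw [layerProd, Fintype.sum_unique, layerProd, layerProd, Matrix.one_kronecker_one]
  | j + 1 => by
    rw [layerProd, layerProd_kronecker_sum ι κ G E F j, Matrix.sum_mul]
    simp only [Matrix.mul_sum, Matrix.mul_kronecker_mul]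
    refine Eq.trans ?_ (Equiv.sum_comp (Fin.snocEquiv fun i : Fin (j+1) => G i)
      fun g => kroneckerMap (· * ·)
        (layerProd ι (fun i => if h : i < j + 1 then E i (g ⟨i, h⟩) else 0) (j + 1))
        (layerProd κ (fun i => if h : i < j + 1 then F i (g ⟨i, h⟩) else 0) (j + 1)))
    rw [Fintype.sum_prod_type, Finset.sum_comm]
    refine Finset.sum_congr rfl fun σ _ => Finset.sum_congr rfl fun g _ => ?_
    have h1 : ∀ (dd : ℕ → Type) [∀ i, Fintype (dd i)] [∀ i, DecidableEq (dd i)]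
        (E : ∀ i, G i → Matrix (dd i) (dd (i + 1)) ℝ),
        layerProd dd (fun i => if h : i < j + 1 then
            E i ((Fin.snocEquiv (fun i : Fin (j+1) => G i)) (σ, g) ⟨i, h⟩) else 0) (j + 1)
          = layerProd dd (fun i => if h : i < j then E i (g ⟨i, h⟩) else 0) j * E j σ := by
      intro dd _ _ E
      rw [layerProd]
      congr 1
      · refine layerProd_congr _ _ _ j fun i hi => ?_
        rw [dif_pos (Nat.lt_succ_of_lt hi), dif_pos hi]
        congr 1
        simp [Fin.snocEquiv, Fin.snoc, hi, Fin.castLT]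
      · rw [dif_pos (Nat.lt_succ_self j)]
        congr 1
        simp [Fin.snocEquiv, Fin.snoc]
    rw [h1 ι E, h1 κ F, Matrix.mul_kronecker_mul]

def Nex (n : ℕ) (N : Fin n → ℕ) : ℕ → ℕ := fun j => if h : j < n then N ⟨j, h⟩ else 0

lemma Nex_eq {n : ℕ} (N : Fin n → ℕ) (j : Fin n) : Nex n N j = N j := by
  simp [Nex]

def NexCast {n : ℕ} (N : Fin n → ℕ) (j : Fin n) : Fin (Nex n N j) ≃ Fin (N j) :=
  finCongr (Nex_eq N j)

def Ecore (n : ℕ) (N : Fin n → ℕ) (dd : ℕ → ℕ)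
    (A : ∀ j : Fin n, Fin (N j) → Matrix (Fin (dd j)) (Fin (dd (j + 1))) ℝ)
    (sel : ∀ j : Fin n, Fin (Nex n N j) → Fin (N j)) :
    ∀ j : ℕ, Fin (Nex n N j) → Matrix (Fin (dd j)) (Fin (dd (j + 1))) ℝ :=
  fun j σ => if h : j < n then A ⟨j, h⟩ (sel ⟨j, h⟩ σ) else 0

lemma triple_swap {α β γ : Type*} [Fintype α] [Fintype β] [Fintype γ]
    (f : α → β → γ → ℝ) :
    ∑ a : α, ∑ b : β, ∑ g : γ, f a b g = ∑ g : γ, ∑ a : α, ∑ b : β, f a b g :=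
  (Finset.sum_congr rfl fun _ _ => Finset.sum_comm).trans Finset.sum_comm

lemma quad_helper {α β γ δ : Type*} [Fintype α] [Fintype β] [Fintype γ] [Fintype δ]
    (f : α → γ → ℝ) (g : β → δ → ℝ) :
    (∑ b : β, ∑ dd : δ, g b dd) * (∑ a : α, ∑ c : γ, f a c)
      = ∑ a : α, ∑ b : β, ∑ c : γ, ∑ dd : δ, f a c * g b dd := by
  rw [Finset.sum_mul_sum, Finset.sum_comm]
  refine Finset.sum_congr rfl fun a _ => Finset.sum_congr rfl fun b _ => ?_
  rw [Finset.sum_mul_sum, Finset.sum_comm]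
  exact Finset.sum_congr rfl fun c _ => Finset.sum_congr rfl fun dd _ => mul_comm _ _

lemma layerProd_Ecore (n : ℕ) (N : Fin n → ℕ) (dd : ℕ → ℕ)
    (A : ∀ j : Fin n, Fin (N j) → Matrix (Fin (dd j)) (Fin (dd (j + 1))) ℝ)
    (sel : ∀ j : Fin n, Fin (Nex n N j) → Fin (N j))
    (x' y : ∀ j : Fin n, Fin (N j))
    (hy : ∀ j : Fin n, sel j ((NexCast N j).symm (x' j)) = y j) :
    layerProd (fun j => Fin (dd j))
      (fun i => if h : i < n then Ecore n N dd A sel i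
          ((Equiv.piCongrRight fun j : Fin n => (NexCast N j).symm) x' ⟨i, h⟩) else 0) n
    = layerProd (fun j => Fin (dd j))
        (fun i => if h : i < n then A ⟨i, h⟩ (y ⟨i, h⟩) else 0) n := by
  refine layerProd_congr _ _ _ n fun i hi => ?_
  simp only [dif_pos hi, Ecore, Equiv.piCongrRight, Equiv.coe_fn_mk, Pi.map_apply]
  rw [hy]

/-- The marginal value function of a tensor-train model under a tensor-train
distribution factorizes as the ordered matrix product of the per-layer Kronecker
cores `C^{(j)} = Σ_σ A^{(j)}(τ_j(σ)) ⊗ B^{(j)}(σ)`. -/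
theorem margValue_tensorTrain_factorization
    (n : ℕ) (hn : 1 ≤ n) (N : Fin n → ℕ)
    (d e : ℕ → ℕ) (hd0 : d 0 = 1) (hdn : d n = 1) (he0 : e 0 = 1) (hen : e n = 1)
    (A : ∀ j : Fin n, Fin (N j) → Matrix (Fin (d j)) (Fin (d (j + 1))) ℝ)
    (B : ∀ j : Fin n, Fin (N j) → Matrix (Fin (e j)) (Fin (e (j + 1))) ℝ)
    (M P : (∀ j, Fin (N j)) → ℝ)
    (hM : ∀ y : ∀ j, Fin (N j), M y =
      ∑ a : Fin (d 0), ∑ b : Fin (d n),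
        layerProd (fun j => Fin (d j))
          (fun j => if h : j < n then A ⟨j, h⟩ (y ⟨j, h⟩) else 0) n a b)
    (hP : ∀ y : ∀ j, Fin (N j), P y =
      ∑ a : Fin (e 0), ∑ b : Fin (e n),
        layerProd (fun j => Fin (e j))
          (fun j => if h : j < n then B ⟨j, h⟩ (y ⟨j, h⟩) else 0) n a b)
    (x : ∀ j, Fin (N j)) (S : Finset (Fin n)) :
    margValue M P x S =
      ∑ a : Fin (d 0) × Fin (e 0), ∑ b : Fin (d n) × Fin (e n),
        layerProd (fun j => Fin (d j) × Fin (e j))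
          (fun j => if h : j < n then
              ∑ σ : Fin (N ⟨j, h⟩),
                Matrix.kroneckerMap (· * ·)
                  (A ⟨j, h⟩ (if (⟨j, h⟩ : Fin n) ∈ S then x ⟨j, h⟩ else σ))
                  (B ⟨j, h⟩ σ)
            else 0) n a b := by
  classical
  set selA : ∀ j : Fin n, Fin (Nex n N j) → Fin (N j) :=
    fun j σ => if j ∈ S then x j else NexCast N j σ with hselA
  set selB : ∀ j : Fin n, Fin (Nex n N j) → Fin (N j) :=
    fun j σ => NexCast N j σ with hselB
  have hcore : layerProd (fun j => Fin (d j) × Fin (e j))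
      (fun j => if h : j < n then
          ∑ σ : Fin (N ⟨j, h⟩),
            Matrix.kroneckerMap (· * ·)
              (A ⟨j, h⟩ (if (⟨j, h⟩ : Fin n) ∈ S then x ⟨j, h⟩ else σ))
              (B ⟨j, h⟩ σ)
        else 0) n
    = layerProd (fun j => Fin (d j) × Fin (e j))
        (fun j => ∑ σ : Fin (Nex n N j), kroneckerMap (· * ·)
          (Ecore n N d A selA j σ) (Ecore n N e B selB j σ)) n := by
    refine layerProd_congr _ _ _ n fun i hi => ?_
    rw [dif_pos hi]
    refine (Fintype.sum_equiv (NexCast N ⟨i, hi⟩) _ _ fun σ => ?_).symm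
    simp only [Ecore, dif_pos hi, hselA, hselB]
  rw [hcore, layerProd_kronecker_sum]
  simp only [Matrix.sum_apply]
  rw [triple_swap]
  rw [← Equiv.sum_comp (Equiv.piCongrRight fun j : Fin n => (NexCast N j).symm)]
  rw [margValue]
  refine Finset.sum_congr rfl fun x' _ => ?_
  rw [layerProd_Ecore n N d A selA x' (mergeDo x x' S)
      (fun j => by simp [hselA, mergeDo, NexCast]),
    layerProd_Ecore n N e B selB x' x' (fun j => by simp [hselB, NexCast])]
  rw [hM (mergeDo x x' S), hP x']
  simp only [Fintype.sum_prod_type, Matrix.kroneckerMap_apply]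
  exact quad_helper
    (fun a c => layerProd (fun j => Fin (d j))
      (fun j => if h : j < n then A ⟨j, h⟩ (mergeDo x x' S ⟨j, h⟩) else 0) n a c)
    (fun b dd => layerProd (fun j => Fin (e j))
      (fun j => if h : j < n then B ⟨j, h⟩ (x' ⟨j, h⟩) else 0) n b dd)
end
end

section
/- For every n ≥ 1, every weight vector w ∈ {−1,1}^n, every threshold R ∈ {0,…,n} and every input x ∈ {0,1}^n: e_0ᵀ · M_1(x_1) · M_2(x_2) ⋯ M_n(x_n) · e_R = 1 if Σ_{j=1}^{n} l_j(x) ≥ R and 0 otherwise; i.e., a single binarized neuron in its reified-cardinality representation is computed exactly by a layered counter automaton with R+1 states per layer (a tensor train of bond dimension R+1). -/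
open Finset

noncomputable section

/-- Transition matrix of the counter automaton with states `{0,…,R}` at one layer:
if the current literal is satisfied (`sat = true`) and the counter `r` is below `R`,
the counter is incremented; otherwise it is kept. -/
def counterMat (R : ℕ) (sat : Bool) : Matrix (Fin (R + 1)) (Fin (R + 1)) ℝ :=
  fun r c =>
    if (r : ℕ) < R ∧ sat = true then (if (c : ℕ) = (r : ℕ) + 1 then 1 else 0)
    else (if c = r then 1 else 0)

lemma counterMat_apply (R : ℕ) (s : Bool) (a b : Fin (R+1)) :
    counterMat R s a b =
      if (b : ℕ) = (if (a : ℕ) < R ∧ s = true then (a : ℕ) + 1 else (a : ℕ)) then 1 else 0 := by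
  unfold counterMat
  split <;> simp [Fin.ext_iff]

lemma counter_prod (R : ℕ) (l : List Bool) (a c : Fin (R+1)) :
    (l.map (counterMat R)).prod a c =
      if (c : ℕ) = min R ((a : ℕ) + l.count true) then 1 else 0 := by
  induction l generalizing a with
  | nil =>
    have ha : (a : ℕ) ≤ R := by omega
    have : min R ((a : ℕ) + ([] : List Bool).count true) = (a : ℕ) := by simp; omega
    rw [this]
    simp [Matrix.one_apply, Fin.ext_iff, eq_comm]
  | cons s t ih =>
    rw [List.map_cons, List.prod_cons, Matrix.mul_apply]
    by_cases h : (a : ℕ) < R ∧ s = true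
    · set a' : Fin (R+1) := ⟨(a : ℕ) + 1, by omega⟩ with ha'
      have key : ∀ b : Fin (R+1), counterMat R s a b = if b = a' then 1 else 0 := by
        intro b
        rw [counterMat_apply, if_pos h]
        simp [Fin.ext_iff, ha']
      simp only [key, ite_mul, one_mul, zero_mul]
      rw [Finset.sum_ite_eq' Finset.univ a' (fun b => (t.map (counterMat R)).prod b c)]
      simp only [Finset.mem_univ, if_pos]
      rw [ih]
      have hc : (s :: t).count true = t.count true + 1 := by
        simp [List.count_cons, h.2]
      have : (a' : ℕ) + t.count true = (a : ℕ) + (s :: t).count true := by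
        simp only [ha', hc]; omega
      rw [this]
    · have key : ∀ b : Fin (R+1), counterMat R s a b = if b = a then 1 else 0 := by
        intro b
        rw [counterMat_apply, if_neg h]
        simp [Fin.ext_iff]
      simp only [key, ite_mul, one_mul, zero_mul]
      rw [Finset.sum_ite_eq' Finset.univ a (fun b => (t.map (counterMat R)).prod b c)]
      simp only [Finset.mem_univ, if_pos]
      rw [ih]
      have ha : (a : ℕ) ≤ R := by omega
      have : min R ((a : ℕ) + t.count true) = min R ((a : ℕ) + (s :: t).count true) := by
        rcases Bool.eq_false_or_eq_true s with hs | hs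
        · have : (a : ℕ) = R := by
            rcases Nat.lt_or_ge (a : ℕ) R with h1 | h1
            · exact absurd ⟨h1, hs⟩ h
            · omega
          simp [List.count_cons, this]
        · simp [hs, List.count_cons]
      rw [this]

lemma count_ofFn {n : ℕ} (f : Fin n → Bool) :
    (List.ofFn f).count true = ∑ j : Fin n, if f j then 1 else 0 := by
  induction n with
  | zero => simp
  | succ m ih =>
    rw [List.ofFn_succ, List.count_cons, Fin.sum_univ_succ, ih (fun j => f j.succ)]
    rcases Bool.eq_false_or_eq_true (f 0) with h | h <;> simp [h] <;> omega

/-- A single binarized neuron in its reified-cardinality representation is computed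
exactly by a layered counter automaton with `R+1` states per layer (a tensor train of
bond dimension `R+1`): `e_0ᵀ · M_1(x_1) ⋯ M_n(x_n) · e_R` equals `1` iff the number of
satisfied literals `Σ_j l_j(x)` is at least the threshold `R`. -/
theorem binarizedNeuron_counterAutomaton
    (n R : ℕ) (hn : 1 ≤ n) (hR : R ≤ n)
    (w : Fin n → ℤ) (hw : ∀ j, w j = 1 ∨ w j = -1)
    (x : Fin n → Bool) :
    (List.ofFn (fun j : Fin n =>
        counterMat R (if w j = 1 then x j else !x j))).prod 0 (Fin.last R) =
      if R ≤ ∑ j : Fin n, (if (if w j = 1 then x j else !x j) then 1 else 0) then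
        (1 : ℝ)
      else 0 := by
  have hmap : (List.ofFn (fun j : Fin n =>
      counterMat R (if w j = 1 then x j else !x j))) =
      (List.ofFn (fun j : Fin n => (if w j = 1 then x j else !x j))).map (counterMat R) := by
    rw [List.map_ofFn]; rfl
  rw [hmap, counter_prod, count_ofFn]
  simp only [Fin.val_last, Fin.val_zero, Nat.zero_add]
  split_ifs with h1 h2 h2 <;> first | rfl | omega
end
end

section
/- Let φ = t_1 ∧ ⋯ ∧ t_m be a 3-CNF formula over Boolean variables z_1, …, z_n. Define F : {−1,1}^n → {−1,1} by F(x) = sign( Σ_{i=1}^{m} sign( Σ_{j ∈ vars(t_i)} w_{ij} · x_j + 3/2 ) − (m − 1/2) ). Then for every x ∈ {−1,1}^n, F(x) = 1 if and only if the assignment encoded by x (z_j true iff x_j = 1) satisfies φ. In particular, this binarized neural network with a single hidden layer of m neurons has exactly as many inputs mapped to +1 as φ has satisfying assignments. -/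
open Finset

attribute [local instance] Classical.propDecidable

noncomputable section

/-- The sign activation: `sign(u) = 1` if `u > 0` and `−1` if `u ≤ 0`. -/
def signR (u : ℝ) : ℝ := if 0 < u then 1 else -1

/-- The weight `w_{ij}` associated with the (optional) polarity of the literal of a
clause on a variable: `+1` for a positive occurrence, `−1` for a negative occurrence,
and `0` if the variable does not occur. -/
def litWeight : Option Bool → ℝ
  | some true => 1
  | some false => -1
  | none => 0

lemma signR_eq_one_iff (u : ℝ) : signR u = 1 ↔ 0 < u := by
  by_cases h : 0 < u <;> simp [signR, h] <;> norm_num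

lemma term_cases (o : Option Bool) (b : Bool) :
    litWeight o * (if b then (1:ℝ) else -1) =
      if o = some b then 1 else if o.isSome then -1 else 0 := by
  cases o with
  | none => simp [litWeight]
  | some p => cases p <;> cases b <;> simp [litWeight]

lemma inner_iff (n : ℕ) (c : Fin n → Option Bool)
    (h3 : (Finset.univ.filter (fun j : Fin n => (c j).isSome)).card = 3)
    (x : Fin n → Bool) :
    signR ((∑ j : Fin n, litWeight (c j) * (if x j then (1:ℝ) else -1)) + 3 / 2) = 1 ↔
      ∃ j : Fin n, c j = some (x j) := by
  set S := Finset.univ.filter (fun j : Fin n => (c j).isSome) with hS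
  set t : Fin n → ℝ := fun j => litWeight (c j) * (if x j then (1:ℝ) else -1) with ht
  have hsum : ∑ j : Fin n, t j = ∑ j ∈ S, t j := by
    refine (Finset.sum_subset (Finset.subset_univ S) ?_).symm
    intro j _ hj
    simp only [hS, Finset.mem_filter, Finset.mem_univ, true_and] at hj
    rcases Option.not_isSome_iff_eq_none.mp hj with h
    simp [ht, h, litWeight]
  have hval : ∀ j ∈ S, t j = if c j = some (x j) then 1 else -1 := by
    intro j hj
    simp only [hS, Finset.mem_filter, Finset.mem_univ, true_and] at hj
    simp only [ht]
    rw [term_cases]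
    split
    · rfl
    · simp [hj]
  rw [signR_eq_one_iff, hsum]
  constructor
  · intro h
    by_contra hc
    push_neg at hc
    have : ∑ j ∈ S, t j = ∑ j ∈ S, (-1 : ℝ) := by
      refine Finset.sum_congr rfl ?_
      intro j hj
      rw [hval j hj]
      simp [hc j]
    rw [this, Finset.sum_const, h3] at h
    norm_num at h
  · rintro ⟨j0, hj0⟩
    have hj0S : j0 ∈ S := by
      rw [hS, Finset.mem_filter]
      exact ⟨Finset.mem_univ _, by rw [hj0]; rfl⟩
    have h1 : t j0 = 1 := by rw [hval j0 hj0S]; simp [hj0]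
    have hsplit : ∑ j ∈ S, t j = t j0 + ∑ j ∈ S.erase j0, t j :=
      (Finset.add_sum_erase S t hj0S).symm
    have hge : ∑ j ∈ S.erase j0, t j ≥ ∑ j ∈ S.erase j0, (-1 : ℝ) := by
      refine Finset.sum_le_sum ?_
      intro j hj
      rw [hval j (Finset.mem_of_mem_erase hj)]
      split <;> norm_num
    rw [Finset.sum_const, Finset.card_erase_of_mem hj0S, h3] at hge
    rw [hsplit, h1]
    simp only [nsmul_eq_mul] at hge
    norm_num at hge ⊢
    linarith

theorem cnfBNN_computes_formula'
    (n m : ℕ) (cl : Fin m → Fin n → Option Bool)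
    (h3 : ∀ i : Fin m, (Finset.univ.filter (fun j : Fin n => (cl i j).isSome)).card = 3)
    (x : Fin n → Bool) :
    signR ((∑ i : Fin m,
      signR ((∑ j : Fin n,
          litWeight (cl i j) * (if x j then (1 : ℝ) else -1)) + 3 / 2)) -
    ((m : ℝ) - 1 / 2)) = 1 ↔ ∀ i : Fin m, ∃ j : Fin n, cl i j = some (x j) := by
  set s : Fin m → ℝ := fun i =>
    signR ((∑ j : Fin n, litWeight (cl i j) * (if x j then (1:ℝ) else -1)) + 3 / 2) with hs
  have hsi : ∀ i, s i = 1 ∨ s i = -1 := by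
    intro i; rw [hs]; simp only [signR]; split <;> simp
  rw [signR_eq_one_iff]
  constructor
  · intro h i
    rw [← inner_iff n (cl i) (h3 i) x]
    by_contra hc
    have hneg : s i = -1 := (hsi i).resolve_left hc
    have hsplit : ∑ k : Fin m, s k = s i + ∑ k ∈ Finset.univ.erase i, s k :=
      (Finset.add_sum_erase _ s (Finset.mem_univ i)).symm
    have hle : ∑ k ∈ Finset.univ.erase i, s k ≤ ∑ k ∈ Finset.univ.erase i, (1:ℝ) := by
      refine Finset.sum_le_sum ?_
      intro k _
      rcases hsi k with h1 | h1 <;> rw [h1] <;> norm_num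
    rw [Finset.sum_const, Finset.card_erase_of_mem (Finset.mem_univ i),
      Finset.card_univ, Fintype.card_fin] at hle
    rw [hsplit, hneg] at h
    have hm : (1:ℕ) ≤ m := Nat.one_le_iff_ne_zero.mpr (by rintro rfl; exact i.elim0)
    simp only [nsmul_eq_mul, mul_one] at hle
    rw [Nat.cast_sub hm] at hle
    push_cast at hle
    linarith
  · intro h
    have : ∑ i : Fin m, s i = m := by
      have : ∀ i : Fin m, s i = 1 := fun i =>
        (inner_iff n (cl i) (h3 i) x).mpr (h i)
      simp [this]
    rw [this]; linarith


/-- The single-hidden-layer binarized neural network associated with a CNF formula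
with `m` clauses (given by `cl i j`, the polarity of variable `j` in clause `i`):
`F(x) = sign( Σ_i sign( Σ_j w_{ij} x_j + 3/2 ) − (m − 1/2) )`, on inputs
`x ∈ {−1,1}^n` encoded by Booleans (`z_j` true ↔ `x_j = 1`). -/
def cnfBNN (n m : ℕ) (cl : Fin m → Fin n → Option Bool) (x : Fin n → Bool) : ℝ :=
  signR ((∑ i : Fin m,
      signR ((∑ j : Fin n,
          litWeight (cl i j) * (if x j then (1 : ℝ) else -1)) + 3 / 2)) -
    ((m : ℝ) - 1 / 2))

/-- For a 3-CNF formula `φ` (each clause has exactly three literals on three distinct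
variables), the associated single-hidden-layer BNN outputs `+1` exactly on the
satisfying assignments of `φ`; in particular it maps exactly as many inputs to `+1`
as `φ` has satisfying assignments. -/
theorem cnfBNN_computes_formula
    (n m : ℕ) (cl : Fin m → Fin n → Option Bool)
    (h3 : ∀ i : Fin m, (Finset.univ.filter (fun j : Fin n => (cl i j).isSome)).card = 3) :
    (∀ x : Fin n → Bool,
      (cnfBNN n m cl x = 1 ↔ ∀ i : Fin m, ∃ j : Fin n, cl i j = some (x j))) ∧
    (Finset.univ.filter (fun x : Fin n → Bool => cnfBNN n m cl x = 1)).card =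
      (Finset.univ.filter
        (fun x : Fin n → Bool => ∀ i : Fin m, ∃ j : Fin n, cl i j = some (x j))).card := by
  have key : ∀ x : Fin n → Bool,
      (cnfBNN n m cl x = 1 ↔ ∀ i : Fin m, ∃ j : Fin n, cl i j = some (x j)) := by
    intro x
    exact cnfBNN_computes_formula' n m cl h3 x
  refine ⟨key, ?_⟩
  congr 1
  exact Finset.filter_congr (fun x _ => by rw [key x])
end
end
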